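/- arXiv:2209.09793 — 5 statements merged into one kernel-verified Lean document; each statement's English description precedes it below -/
import Mathlib

section
/- If u* : V → ℝ is optimal for min Σ_h u_h subject to u_h − u_k ≤ s_{h,k} for (h,k) ∈ A and u_h ≥ d_h for h ∈ V, then for every k ∈ V, u*_k = max( d_k, max_{h : (h,k)∈A} (u*_h − s_{h,k}) ), i.e. the recursive lower bound holds with equality at an optimum. -/
/-- at an optimum of min Σ u_h over the difference-constraint
feasible set, u*_k = max(d_k, max_{h:(h,k)∈A} (u*_h − s_{h,k})) for every k. -/
theorem stmt_1 {V : Type*} [Fintype V] [Nonempty V]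
    (A : Set (V × V)) (s : V → V → ℝ) (d : V → ℝ)
    (hs : ∀ hk ∈ A, 0 ≤ s hk.1 hk.2)
    (u : V → ℝ)
    (hfeas : (∀ hk ∈ A, u hk.1 - u hk.2 ≤ s hk.1 hk.2) ∧ (∀ h, d h ≤ u h))
    (hopt : ∀ v : V → ℝ,
      (∀ hk ∈ A, v hk.1 - v hk.2 ≤ s hk.1 hk.2) → (∀ h, d h ≤ v h) →
      ∑ h, u h ≤ ∑ h, v h) :
    ∀ k, IsGreatest (insert (d k) {x | ∃ h, (h, k) ∈ A ∧ x = u h - s h k}) (u k) := by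
  classical
  intro k
  constructor
  · -- membership
    by_contra hmem
    simp only [Set.mem_insert_iff, Set.mem_setOf_eq, not_or, not_exists, not_and] at hmem
    obtain ⟨hdk, harc⟩ := hmem
    set S : Finset V := Finset.univ.filter (fun h => (h, k) ∈ A) with hS
    set T : Finset ℝ := insert (u k - d k) (S.image fun h => u k - (u h - s h k)) with hT
    have hTne : T.Nonempty := ⟨_, Finset.mem_insert_self _ _⟩
    set ε : ℝ := T.min' hTne with hε
    have hεpos : 0 < ε := by
      rw [hε, Finset.lt_min'_iff]
      intro b hb
      rw [hT, Finset.mem_insert] at hb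
      rcases hb with rfl | hb
      · have := hfeas.2 k
        have : d k < u k := lt_of_le_of_ne this (fun h => hdk h.symm)
        linarith
      · obtain ⟨h, hhS, rfl⟩ := Finset.mem_image.mp hb
        rw [hS, Finset.mem_filter] at hhS
        have h1 : u h - u k ≤ s h k := hfeas.1 (h, k) hhS.2
        have h2 : u k ≠ u h - s h k := harc h hhS.2
        have : u h - s h k < u k := lt_of_le_of_ne (by linarith) (fun h' => h2 h'.symm)
        linarith
    have hεd : ε ≤ u k - d k := Finset.min'_le _ _ (Finset.mem_insert_self _ _)
    have hεarc : ∀ h, (h, k) ∈ A → ε ≤ u k - (u h - s h k) := by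
      intro h hA
      exact Finset.min'_le _ _ (Finset.mem_insert_of_mem
        (Finset.mem_image.mpr ⟨h, Finset.mem_filter.mpr ⟨Finset.mem_univ _, hA⟩, rfl⟩))
    set v : V → ℝ := Function.update u k (u k - ε) with hv
    have hf1 : ∀ hk ∈ A, v hk.1 - v hk.2 ≤ s hk.1 hk.2 := by
      rintro ⟨a, b⟩ hab
      show v a - v b ≤ s a b
      by_cases ha : a = k <;> by_cases hb : b = k
      · subst ha; subst hb
        simp only [hv, Function.update_self, sub_self]
        exact hs _ hab
      · subst ha
        simp only [hv, Function.update_self, Function.update_of_ne hb]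
        have := hfeas.1 (a, b) hab
        simp only at this
        linarith
      · subst hb
        simp only [hv, Function.update_self, Function.update_of_ne ha]
        have := hεarc a hab
        linarith
      · simp only [hv, Function.update_of_ne ha, Function.update_of_ne hb]
        exact hfeas.1 (a, b) hab
    have hf2 : ∀ h, d h ≤ v h := by
      intro h
      by_cases hh : h = k
      · subst hh
        simp only [hv, Function.update_self]
        linarith
      · simp only [hv, Function.update_apply, if_neg hh]
        exact hfeas.2 h
    have hle := hopt v hf1 hf2
    have hsum : ∑ h, v h = (∑ h, u h) - ε := by
      rw [hv, Finset.sum_update_of_mem (Finset.mem_univ k)]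
      rw [← Finset.add_sum_erase _ u (Finset.mem_univ k), Finset.sdiff_singleton_eq_erase]
      ring
    rw [hsum] at hle
    linarith
  · -- upper bound
    rintro x (hx | ⟨h, hhA, rfl⟩)
    · exact hx ▸ hfeas.2 k
    · have := hfeas.1 (h, k) hhA
      simp at this
      linarith
end

section
/- If (u, x) is optimal for min α z_1(u) + β Σ_h x_h with α > 0, β > 0 and z_1(u) = Σ_h u_h, subject to u_h − x_h − u_k + x_k ≤ s_{h,k}, u_h ≥ d_h, 0 ≤ x_h ≤ L_h, then for every h ∈ V either u_h = d_h or x_h = 0 (or both). -/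
/-- at an optimum of min α Σ u_h + β Σ x_h (α, β > 0) over the
delay/anticipation feasible set, for every h either u_h = d_h or x_h = 0. -/
theorem stmt_10 {V : Type*} [Fintype V]
    (A : Set (V × V)) (s : V → V → ℝ) (d : V → ℝ) (L : V → ℝ)
    (hs : ∀ hk ∈ A, 0 ≤ s hk.1 hk.2) (hL : ∀ h, 0 ≤ L h)
    (α β : ℝ) (hα : 0 < α) (hβ : 0 < β)
    (u x : V → ℝ)
    (hfeas : (∀ hk ∈ A, u hk.1 - x hk.1 - u hk.2 + x hk.2 ≤ s hk.1 hk.2) ∧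
      (∀ h, d h ≤ u h) ∧ (∀ h, 0 ≤ x h ∧ x h ≤ L h))
    (hopt : ∀ u' x' : V → ℝ,
      (∀ hk ∈ A, u' hk.1 - x' hk.1 - u' hk.2 + x' hk.2 ≤ s hk.1 hk.2) →
      (∀ h, d h ≤ u' h) → (∀ h, 0 ≤ x' h ∧ x' h ≤ L h) →
      α * (∑ h, u h) + β * (∑ h, x h) ≤ α * (∑ h, u' h) + β * (∑ h, x' h)) :
    ∀ h, u h = d h ∨ x h = 0 := by
  classical
  obtain ⟨hA, hd, hx⟩ := hfeas
  intro h
  by_contra hcon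
  push_neg at hcon
  obtain ⟨h1, h2⟩ := hcon
  have hu : d h < u h := lt_of_le_of_ne (hd h) (Ne.symm h1)
  have hxh : 0 < x h := lt_of_le_of_ne (hx h).1 (Ne.symm h2)
  set ε : ℝ := min (u h - d h) (x h) with hε
  have hεpos : 0 < ε := lt_min (by linarith) hxh
  have hε1 : ε ≤ u h - d h := min_le_left _ _
  have hε2 : ε ≤ x h := min_le_right _ _
  set u' : V → ℝ := Function.update u h (u h - ε) with hu'
  set x' : V → ℝ := Function.update x h (x h - ε) with hx'
  have key : ∀ v, u' v - x' v = u v - x v := by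
    intro v
    by_cases hv : v = h
    · subst hv; simp [hu', hx']
    · simp [hu', hx', Function.update_of_ne hv]
  have key2 : ∀ v, d v ≤ u' v := by
    intro v
    by_cases hv : v = h
    · subst hv; simp [hu']; linarith
    · simp [hu', Function.update_of_ne hv]; exact hd v
  have key3 : ∀ v, 0 ≤ x' v ∧ x' v ≤ L v := by
    intro v
    by_cases hv : v = h
    · rw [hv]; simp [hx']
      refine ⟨by linarith, ?_⟩
      have := (hx h).2
      linarith
    · simp [hx', Function.update_of_ne hv]; exact hx v
  have hA' : ∀ hk ∈ A, u' hk.1 - x' hk.1 - u' hk.2 + x' hk.2 ≤ s hk.1 hk.2 := by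
    intro hk hm
    have e1 := key hk.1
    have e2 := key hk.2
    have := hA hk hm
    linarith
  have hob := hopt u' x' hA' key2 key3
  have su : ∑ v, u' v = (∑ v, u v) - ε := by
    rw [hu', Finset.sum_update_of_mem (Finset.mem_univ h), Finset.sdiff_singleton_eq_erase,
      ← Finset.add_sum_erase _ u (Finset.mem_univ h)]
    ring
  have sx : ∑ v, x' v = (∑ v, x v) - ε := by
    rw [hx', Finset.sum_update_of_mem (Finset.mem_univ h), Finset.sdiff_singleton_eq_erase,
      ← Finset.add_sum_erase _ x (Finset.mem_univ h)]
    ring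
  rw [su, sx] at hob
  nlinarith
end

section
/- Adding, for each h ∈ V, a sink vertex h' with a single arc (h, h') of weight ρ_h and deviation d_{h'} = 0, the componentwise minimum solution û of the extended difference-constraint system satisfies û_{h'} = max(0, û_h − ρ_h) for every h; hence Σ_h û_{h'} equals the minimum total lateness Σ_h max(0, u_h − ρ_h) over all feasible u of the original system. -/
/-- adding for each h a private sink h' (modeled as `Sum.inr h`)
with a single arc (h, h') of weight ρ_h and deviation 0, the componentwise
minimum û of the extended system satisfies û_{h'} = max(0, û_h − ρ_h), and
Σ_h û_{h'} is the minimum total lateness over feasible u of the original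
system. -/
theorem stmt_16 {V : Type*} [Fintype V]
    (A : Set (V × V)) (s : V → V → ℝ) (d : V → ℝ) (ρ : V → ℝ)
    (hs : ∀ hk ∈ A, 0 ≤ s hk.1 hk.2) (hρ : ∀ h, 0 ≤ ρ h)
    (uhat : V ⊕ V → ℝ)
    (hfeas : (∀ hk ∈ A, uhat (Sum.inl hk.1) - uhat (Sum.inl hk.2) ≤ s hk.1 hk.2) ∧
      (∀ h : V, uhat (Sum.inl h) - uhat (Sum.inr h) ≤ ρ h) ∧
      (∀ h : V, d h ≤ uhat (Sum.inl h)) ∧ (∀ h : V, 0 ≤ uhat (Sum.inr h)))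
    (hmin : ∀ w : V ⊕ V → ℝ,
      (∀ hk ∈ A, w (Sum.inl hk.1) - w (Sum.inl hk.2) ≤ s hk.1 hk.2) →
      (∀ h : V, w (Sum.inl h) - w (Sum.inr h) ≤ ρ h) →
      (∀ h : V, d h ≤ w (Sum.inl h)) → (∀ h : V, 0 ≤ w (Sum.inr h)) →
      ∀ v, uhat v ≤ w v) :
    (∀ h : V, uhat (Sum.inr h) = max 0 (uhat (Sum.inl h) - ρ h)) ∧
    IsLeast {z : ℝ | ∃ u : V → ℝ,
        (∀ hk ∈ A, u hk.1 - u hk.2 ≤ s hk.1 hk.2) ∧ (∀ h, d h ≤ u h) ∧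
        z = ∑ h, max 0 (u h - ρ h)}
      (∑ h, uhat (Sum.inr h)) := by
  obtain ⟨h1, h2, h3, h4⟩ := hfeas
  have key : ∀ h : V, uhat (Sum.inr h) = max 0 (uhat (Sum.inl h) - ρ h) := by
    intro h
    have hge : max 0 (uhat (Sum.inl h) - ρ h) ≤ uhat (Sum.inr h) :=
      max_le (h4 h) (by linarith [h2 h])
    have hle : uhat (Sum.inr h) ≤ max 0 (uhat (Sum.inl h) - ρ h) := by
      set w : V ⊕ V → ℝ := fun v => Sum.elim (fun k => uhat (Sum.inl k))
        (fun k => max 0 (uhat (Sum.inl k) - ρ k)) v with hw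
      have := hmin w h1 (fun k => by simp [hw]; linarith [le_max_right 0 (uhat (Sum.inl k) - ρ k)])
        (fun k => h3 k) (fun k => le_max_left _ _) (Sum.inr h)
      simpa [hw] using this
    linarith
  refine ⟨key, ⟨⟨fun h => uhat (Sum.inl h), h1, h3, by simp [key]⟩, ?_⟩⟩
  rintro z ⟨u, hu1, hu2, rfl⟩
  set w : V ⊕ V → ℝ := fun v => Sum.elim u (fun k => max 0 (u k - ρ k)) v with hw
  have hmw := hmin w hu1
    (fun k => by simp [hw]; linarith [le_max_right 0 (u k - ρ k)])
    hu2 (fun k => le_max_left _ _)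
  exact Finset.sum_le_sum fun h _ => by simpa [hw] using hmw (Sum.inr h)
end

section
/- If vertex k is not reachable in (V,A) from any vertex h with d_h > d_k (i.e., no directed path from such an h to k), then the componentwise-minimum solution û of {u : u_h − u_k ≤ s_{h,k}, u_h ≥ d_h} satisfies û_k = d_k; in particular, vehicles in connected components where all deviations are ≤ d_k and with no incoming influence need no corrective delay. -/
/-!
Let `R` be the set of vertices from which `k` is reachable. Since `R` is closed under taking
predecessors and slacks are nonnegative, capping `û` at `d k` on `R` preserves every difference
constraint; the hypothesis says `d ≤ d k` on `R`, so the capped potential is still feasible.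
Minimality of `û` then forces `û k ≤ d k`.
-/

open Relation

theorem List.exists_isChain_head?_getLast?_of_reflTransGen {α : Type*} {r : α → α → Prop}
    {a b : α} (h : ReflTransGen r a b) :
    ∃ l : List α, l.IsChain r ∧ l.head? = some a ∧ l.getLast? = some b := by
  obtain ⟨l, hl, hlast⟩ := List.exists_isChain_cons_of_relationReflTransGen h
  exact ⟨a :: l, hl, rfl, by rw [List.getLast?_eq_some_getLast (List.cons_ne_nil _ _), hlast]⟩

theorem piecewise_min_sub_le {V : Type*} {A : Set (V × V)} {s : V → V → ℝ}
    (hs : ∀ e ∈ A, 0 ≤ s e.1 e.2) {R : Set V} [DecidablePred (· ∈ R)]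
    (hR : ∀ e ∈ A, e.2 ∈ R → e.1 ∈ R) (c : ℝ) {u : V → ℝ}
    (hu : ∀ e ∈ A, u e.1 - u e.2 ≤ s e.1 e.2) :
    ∀ e ∈ A, R.piecewise (fun j => min (u j) c) u e.1 -
      R.piecewise (fun j => min (u j) c) u e.2 ≤ s e.1 e.2 := by
  rintro ⟨a, b⟩ hab
  have hub := hu _ hab
  have hsab := hs _ hab
  dsimp only at hub hsab ⊢
  by_cases hb : b ∈ R
  · rw [Set.piecewise_eq_of_mem _ _ _ (hR _ hab hb), Set.piecewise_eq_of_mem _ _ _ hb,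
      sub_le_iff_le_add, add_comm, ← min_add_add_right]
    exact min_le_min (by linarith) (by linarith)
  · rw [Set.piecewise_eq_of_notMem _ _ _ hb]
    by_cases ha : a ∈ R
    · rw [Set.piecewise_eq_of_mem _ _ _ ha]
      linarith [min_le_left (u a) c]
    · rwa [Set.piecewise_eq_of_notMem _ _ _ ha]

theorem stmt_18_general {V : Type*}
    (A : Set (V × V)) (s : V → V → ℝ) (d : V → ℝ)
    (hs : ∀ hk ∈ A, 0 ≤ s hk.1 hk.2)
    (uhat : V → ℝ)
    (hfeas : (∀ hk ∈ A, uhat hk.1 - uhat hk.2 ≤ s hk.1 hk.2) ∧ (∀ h, d h ≤ uhat h))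
    (hmin : ∀ u : V → ℝ,
      (∀ hk ∈ A, u hk.1 - u hk.2 ≤ s hk.1 hk.2) → (∀ h, d h ≤ u h) →
      ∀ j, uhat j ≤ u j)
    (k : V)
    (hreach : ¬ ∃ (h : V) (l : List V),
      d k < d h ∧ l.Chain' (fun a b => (a, b) ∈ A) ∧
      l.head? = some h ∧ l.getLast? = some k) :
    uhat k = d k := by
  classical
  set R : Set V := {j | ReflTransGen (fun a b => (a, b) ∈ A) j k}
  have hRd : ∀ j ∈ R, d j ≤ d k := fun j hj => not_lt.1 fun hlt =>
    let ⟨l, hl⟩ := List.exists_isChain_head?_getLast?_of_reflTransGen hj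
    hreach ⟨j, l, hlt, hl⟩
  have hRA : ∀ e ∈ A, e.2 ∈ R → e.1 ∈ R := fun e he h => ReflTransGen.head he h
  have hdu : ∀ h, d h ≤ R.piecewise (fun j => min (uhat j) (d k)) uhat h := fun h => by
    by_cases hh : h ∈ R
    · rw [Set.piecewise_eq_of_mem _ _ _ hh]
      exact le_min (hfeas.2 h) (hRd h hh)
    · rw [Set.piecewise_eq_of_notMem _ _ _ hh]
      exact hfeas.2 h
  have hk := hmin _ (piecewise_min_sub_le hs hRA (d k) hfeas.1) hdu k
  rw [Set.piecewise_eq_of_mem _ _ _ (show k ∈ R from ReflTransGen.refl)] at hk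
  exact le_antisymm (hk.trans (min_le_right _ _)) (hfeas.2 k)

/-- if k is not reachable (by a directed path in A) from any
vertex h with d_h > d_k, then the componentwise-minimum solution û satisfies
û_k = d_k. -/
theorem stmt_18 {V : Type*} [Fintype V]
    (A : Set (V × V)) (s : V → V → ℝ) (d : V → ℝ)
    (hs : ∀ hk ∈ A, 0 ≤ s hk.1 hk.2)
    (uhat : V → ℝ)
    (hfeas : (∀ hk ∈ A, uhat hk.1 - uhat hk.2 ≤ s hk.1 hk.2) ∧ (∀ h, d h ≤ uhat h))
    (hmin : ∀ u : V → ℝ,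
      (∀ hk ∈ A, u hk.1 - u hk.2 ≤ s hk.1 hk.2) → (∀ h, d h ≤ u h) →
      ∀ j, uhat j ≤ u j)
    (k : V)
    (hreach : ¬ ∃ (h : V) (l : List V),
      d k < d h ∧ l.Chain' (fun a b => (a, b) ∈ A) ∧
      l.head? = some h ∧ l.getLast? = some k) :
    uhat k = d k :=
  stmt_18_general A s d hs uhat hfeas hmin k hreach
end

section
/- Monotonicity of the optimal recovery: if d ≤ d' componentwise, then the componentwise-minimum solutions û (for deviations d) and û' (for deviations d') of the system {u_h − u_k ≤ s_{h,k} ∀(h,k)∈A, u_h ≥ deviations} satisfy û ≤ û' componentwise; moreover if d' = d + c·1 for a constant c ≥ 0 then û' = û + c·1. -/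
theorem stmt_19_general {V : Type*}
    (A : Set (V × V)) (s : V → V → ℝ) (d d' : V → ℝ)
    (uhat uhat' : V → ℝ)
    (hfeas : (∀ hk ∈ A, uhat hk.1 - uhat hk.2 ≤ s hk.1 hk.2) ∧ (∀ h, d h ≤ uhat h))
    (hmin : ∀ u : V → ℝ,
      (∀ hk ∈ A, u hk.1 - u hk.2 ≤ s hk.1 hk.2) → (∀ h, d h ≤ u h) →
      ∀ k, uhat k ≤ u k)
    (hfeas' : (∀ hk ∈ A, uhat' hk.1 - uhat' hk.2 ≤ s hk.1 hk.2) ∧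
      (∀ h, d' h ≤ uhat' h))
    (hmin' : ∀ u : V → ℝ,
      (∀ hk ∈ A, u hk.1 - u hk.2 ≤ s hk.1 hk.2) → (∀ h, d' h ≤ u h) →
      ∀ k, uhat' k ≤ u k)
    (hdd : ∀ h, d h ≤ d' h) :
    (∀ k, uhat k ≤ uhat' k) ∧
    (∀ c : ℝ, 0 ≤ c → (∀ h, d' h = d h + c) → ∀ k, uhat' k = uhat k + c) := by
  obtain ⟨hA, hd⟩ := hfeas
  obtain ⟨hA', hd'⟩ := hfeas'
  refine ⟨hmin uhat' hA' fun h => (hdd h).trans (hd' h), fun c _ hc k => ?_⟩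
  -- The constraints only involve differences, so û + c is feasible for d' and û' - c for d.
  have le_shift : uhat' k ≤ uhat k + c :=
    hmin' (uhat · + c) (fun hk hk_mem => by simpa using hA hk hk_mem)
      (fun h => by linarith [hc h, hd h]) k
  have shift_ge : uhat k ≤ uhat' k - c :=
    hmin (uhat' · - c) (fun hk hk_mem => by simpa using hA' hk hk_mem)
      (fun h => by linarith [hc h, hd' h]) k
  linarith

/-- monotonicity of the optimal recovery: if d ≤ d' then the
componentwise-minimum solutions satisfy û ≤ û'; and if d' = d + c·1 with
c ≥ 0 then û' = û + c·1. -/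
theorem stmt_19 {V : Type*} [Fintype V]
    (A : Set (V × V)) (s : V → V → ℝ) (d d' : V → ℝ)
    (hs : ∀ hk ∈ A, 0 ≤ s hk.1 hk.2)
    (uhat uhat' : V → ℝ)
    (hfeas : (∀ hk ∈ A, uhat hk.1 - uhat hk.2 ≤ s hk.1 hk.2) ∧ (∀ h, d h ≤ uhat h))
    (hmin : ∀ u : V → ℝ,
      (∀ hk ∈ A, u hk.1 - u hk.2 ≤ s hk.1 hk.2) → (∀ h, d h ≤ u h) →
      ∀ k, uhat k ≤ u k)
    (hfeas' : (∀ hk ∈ A, uhat' hk.1 - uhat' hk.2 ≤ s hk.1 hk.2) ∧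
      (∀ h, d' h ≤ uhat' h))
    (hmin' : ∀ u : V → ℝ,
      (∀ hk ∈ A, u hk.1 - u hk.2 ≤ s hk.1 hk.2) → (∀ h, d' h ≤ u h) →
      ∀ k, uhat' k ≤ u k)
    (hdd : ∀ h, d h ≤ d' h) :
    (∀ k, uhat k ≤ uhat' k) ∧
    (∀ c : ℝ, 0 ≤ c → (∀ h, d' h = d h + c) → ∀ k, uhat' k = uhat k + c) :=
  stmt_19_general A s d d' uhat uhat' hfeas hmin hfeas' hmin' hdd
end
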